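/- For any k linearly independent polynomials f_1, ..., f_k ∈ F[x], any two SDEs of order k satisfied by all the f_i are equivalent: if ∑_{i=0}^k p_i(x)g^{(i)} = 0 and ∑_{i=0}^k q_i(x)g^{(i)} = 0 are both satisfied by f_1,...,f_k, then p_k·q_i = q_k·p_i for all i ∈ {0,...,k-1}. -/

import Mathlib

/-!
If `f₁, …, f_k` are linearly independent polynomials in characteristic zero, their Wronskian
`det (f_j^{(i)})` is nonzero. Subtracting from one `f_a` a multiple of an `f_b` of the same
degree changes neither the Wronskian nor linear independence but lowers the total degree, so we
may assume the degrees `d_j` are distinct. Multiplying row `i` by `X ^ i` then bounds column `j`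
by degree `d_j`, and the coefficient of `X ^ (∑ d_j)` in the determinant is
`∏ lc(f_j) · det (d_j.descFactorial i)`, a Vandermonde determinant in the distinct `d_j`.

Given the two equations, the row vector `r_i = p_k q_i - q_k p_i` (`i < k`) kills the highest
derivative and satisfies `r · W = 0`, hence `r = 0` since `det W ≠ 0`.
-/

open Polynomial Finset

namespace Polynomial

variable {R : Type*} [CommSemiring R]

theorem coeff_prod_sum_of_natDegree_le {ι : Type*} (s : Finset ι)
    (f : ι → R[X]) (n : ι → ℕ) (h : ∀ i ∈ s, (f i).natDegree ≤ n i) :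
    (∏ i ∈ s, f i).coeff (∑ i ∈ s, n i) = ∏ i ∈ s, (f i).coeff (n i) := by
  classical
  induction s using Finset.induction_on with
  | empty => simp
  | insert a s ha ih =>
    rw [prod_insert ha, prod_insert ha, sum_insert ha,
      coeff_mul_add_eq_of_natDegree_le (h a (mem_insert_self a s))
        ((natDegree_prod_le _ _).trans (sum_le_sum fun i hi => h i (mem_insert_of_mem hi))),
      ih fun i hi => h i (mem_insert_of_mem hi)]

theorem natDegree_X_pow_mul_iterate_derivative_le (p : R[X]) (i : ℕ) :
    (X ^ i * derivative^[i] p).natDegree ≤ p.natDegree := by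
  by_cases hi : i ≤ p.natDegree
  · calc (X ^ i * derivative^[i] p).natDegree ≤ i + (p.natDegree - i) :=
          natDegree_mul_le.trans
            (add_le_add (natDegree_X_pow_le i) (natDegree_iterate_derivative p i))
      _ = p.natDegree := by omega
  · simp [iterate_derivative_eq_zero (not_le.mp hi)]

theorem coeff_X_pow_mul_iterate_derivative_natDegree (p : R[X]) (i : ℕ) :
    (X ^ i * derivative^[i] p).coeff p.natDegree =
      p.natDegree.descFactorial i • p.leadingCoeff := by
  rw [coeff_X_pow_mul']
  split_ifs with hi
  · rw [coeff_iterate_derivative, Nat.sub_add_cancel hi, leadingCoeff]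
  · simp [Nat.descFactorial_of_lt (not_le.mp hi)]

end Polynomial

theorem Matrix.coeff_det_of_natDegree_le {R n : Type*} [CommRing R] [Fintype n]
    [DecidableEq n] (A : Matrix n n R[X]) (d : n → ℕ) (h : ∀ i j, (A i j).natDegree ≤ d j) :
    A.det.coeff (∑ j, d j) = (Matrix.of fun i j => (A i j).coeff (d j)).det := by
  simp only [Matrix.det_apply, finsetSum_coeff, Matrix.of_apply]
  refine sum_congr rfl fun σ _ => ?_
  rw [coeff_smul, coeff_prod_sum_of_natDegree_le _ _ _ fun i _ => h _ _]

theorem Matrix.det_descFactorial_ne_zero {R : Type*} [CommRing R] [IsDomain R] [CharZero R]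
    {k : ℕ} {d : Fin k → ℕ} (hd : Function.Injective d) :
    (Matrix.of fun i j : Fin k => ((d j).descFactorial i : R)).det ≠ 0 := by
  have htranspose : (Matrix.of fun i j : Fin k => ((d j).descFactorial i : R)).transpose =
      Matrix.of fun i (j : Fin k) => (descPochhammer R j).eval (d i : R) := by
    ext i j
    simp [descPochhammer_eval_eq_descFactorial]
  rw [← Matrix.det_transpose, htranspose,
    ← Matrix.det_eval_matrixOfPolynomials_eq_det_vandermonde _ _ (descPochhammer_natDegree R ·)
      (monic_descPochhammer R ·)]
  exact Matrix.det_vandermonde_ne_zero_iff.mpr (Nat.cast_injective.comp hd)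

theorem LinearIndependent.update_sub_smul {R M ι : Type*} [CommRing R] [DecidableEq ι]
    [AddCommGroup M] [Module R M] {f : ι → M} (hf : LinearIndependent R f) {a b : ι}
    (hab : a ≠ b) (c : R) :
    LinearIndependent R (Function.update f a (f a - c • f b)) :=
  hf.update a _ ⟨1, one_mem _, Finsupp.single a 1 - Finsupp.single b c, by simp [hab.symm],
    by simp [Finsupp.linearCombination_single]⟩

namespace Polynomial

variable {R : Type*} [CommRing R]

noncomputable def wronskianMatrix {k : ℕ} (f : Fin k → R[X]) : Matrix (Fin k) (Fin k) R[X] :=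
  Matrix.of fun i j => derivative^[i] (f j)

@[simp]
theorem wronskianMatrix_apply {k : ℕ} (f : Fin k → R[X]) (i j : Fin k) :
    wronskianMatrix f i j = derivative^[i] (f j) :=
  rfl

theorem det_wronskianMatrix_update_sub_smul {k : ℕ} (f : Fin k → R[X]) {a b : Fin k}
    (hab : a ≠ b) (c : R) :
    (wronskianMatrix (Function.update f a (f a - c • f b))).det = (wronskianMatrix f).det := by
  rw [← Matrix.det_updateCol_add_smul_self (wronskianMatrix f) hab (-C c)]
  congr 1
  ext i j
  rcases eq_or_ne j a with rfl | hj
  · simp [smul_eq_C_mul, sub_eq_add_neg]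
  · simp [hj]

theorem natDegree_sub_smul_leadingCoeff_div_lt {F : Type*} [Field F] {p q : F[X]}
    (hpq : p.natDegree = q.natDegree) (hq : q ≠ 0)
    (hne : p - (p.leadingCoeff / q.leadingCoeff) • q ≠ 0) :
    (p - (p.leadingCoeff / q.leadingCoeff) • q).natDegree < p.natDegree := by
  have hp : p ≠ 0 := by rintro rfl; simp at hne
  have hlc : q.leadingCoeff ≠ 0 := leadingCoeff_ne_zero.mpr hq
  have hc : p.leadingCoeff / q.leadingCoeff ≠ 0 := div_ne_zero (leadingCoeff_ne_zero.mpr hp) hlc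
  refine natDegree_lt_natDegree hne (degree_sub_lt_left ?_ hp ?_)
  · rw [smul_eq_C_mul, degree_C_mul hc, degree_eq_natDegree hp, degree_eq_natDegree hq, hpq]
  · rw [smul_eq_C_mul, leadingCoeff_mul, leadingCoeff_C, div_mul_cancel₀ _ hlc]

theorem det_wronskianMatrix_ne_zero_of_injective {F : Type*} [Field F] [CharZero F] {k : ℕ}
    {f : Fin k → F[X]} (hf : ∀ j, f j ≠ 0)
    (hd : Function.Injective fun j => (f j).natDegree) :
    (wronskianMatrix f).det ≠ 0 := by
  have hcoeff := Matrix.coeff_det_of_natDegree_le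
    (Matrix.of fun i j : Fin k => X ^ (i : ℕ) * wronskianMatrix f i j) (fun j => (f j).natDegree)
    fun i j => natDegree_X_pow_mul_iterate_derivative_le (f j) i
  have hrow := Matrix.det_mul_row (fun j => (f j).leadingCoeff)
    (Matrix.of fun i j : Fin k => ((f j).natDegree.descFactorial i : F))
  simp only [Matrix.of_apply] at hrow
  intro h
  rw [Matrix.det_mul_column (fun i : Fin k => X ^ (i : ℕ)), h, mul_zero, coeff_zero] at hcoeff
  simp only [wronskianMatrix_apply, Matrix.of_apply, coeff_X_pow_mul_iterate_derivative_natDegree,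
    nsmul_eq_mul', hrow] at hcoeff
  exact mul_ne_zero (prod_ne_zero_iff.mpr fun j _ => leadingCoeff_ne_zero.mpr (hf j))
    (Matrix.det_descFactorial_ne_zero hd) hcoeff.symm

theorem det_wronskianMatrix_ne_zero {F : Type*} [Field F] [CharZero F] {k : ℕ}
    {f : Fin k → F[X]} (hf : LinearIndependent F f) : (wronskianMatrix f).det ≠ 0 := by
  classical
  induction hn : ∑ j, (f j).natDegree using Nat.strong_induction_on generalizing f with
  | _ n ih =>
  by_cases hinj : Function.Injective fun j => (f j).natDegree
  · exact det_wronskianMatrix_ne_zero_of_injective hf.ne_zero hinj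
  obtain ⟨a, b, hdeg, hab⟩ := Function.not_injective_iff.mp hinj
  set c := (f a).leadingCoeff / (f b).leadingCoeff
  have hg := hf.update_sub_smul hab c
  have hlt : (f a - c • f b).natDegree < (f a).natDegree :=
    natDegree_sub_smul_leadingCoeff_div_lt hdeg (hf.ne_zero b) (by simpa using hg.ne_zero a)
  rw [← det_wronskianMatrix_update_sub_smul f hab c]
  refine ih _ ?_ hg rfl
  rw [← hn]
  refine sum_lt_sum (fun j _ => ?_) ⟨a, mem_univ a, by simpa using hlt⟩
  rcases eq_or_ne j a with rfl | hj
  · simpa using hlt.le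
  · simp [hj]

end Polynomial

theorem stmt6_general {F : Type*} [Field F] [CharZero F] {k : ℕ} (f : Fin k → F[X])
    (hf : LinearIndependent F f) (p q : Fin (k + 1) → F[X])
    (hfp : ∀ j, ∑ i, p i * derivative^[(i : ℕ)] (f j) = 0)
    (hfq : ∀ j, ∑ i, q i * derivative^[(i : ℕ)] (f j) = 0) :
    ∀ i : Fin k, p (Fin.last k) * q i.castSucc = q (Fin.last k) * p i.castSucc := by
  have hcomb : Matrix.vecMul
      (fun i => p (Fin.last k) * q i.castSucc - q (Fin.last k) * p i.castSucc)
      (wronskianMatrix f) = 0 := by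
    funext j
    have hpj := hfp j
    have hqj := hfq j
    simp only [Fin.sum_univ_castSucc, Fin.val_castSucc, Fin.val_last] at hpj hqj
    simp only [Matrix.vecMul, dotProduct, wronskianMatrix_apply, sub_mul, sum_sub_distrib,
      mul_assoc, ← mul_sum, Pi.zero_apply]
    linear_combination p (Fin.last k) * hqj - q (Fin.last k) * hpj
  intro i
  exact sub_eq_zero.mp
    (congrFun (Matrix.eq_zero_of_vecMul_eq_zero (det_wronskianMatrix_ne_zero hf) hcomb) i)

theorem stmt6 {F : Type*} [Field F] [CharZero F] {k : ℕ} (f : Fin k → F[X])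
    (hf : LinearIndependent F f) (p q : Fin (k + 1) → F[X]) (hp : p ≠ 0) (hq : q ≠ 0)
    (hfp : ∀ j, ∑ i, p i * derivative^[(i : ℕ)] (f j) = 0)
    (hfq : ∀ j, ∑ i, q i * derivative^[(i : ℕ)] (f j) = 0) :
    ∀ i : Fin k, p (Fin.last k) * q i.castSucc = q (Fin.last k) * p i.castSucc :=
  stmt6_general f hf p q hfp hfq
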